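/- arXiv:1608.06737 — 4 statements merged into one kernel-verified Lean document; each statement's English description precedes it below -/
import Mathlib

section
/- For every complex s with Re(s) > 0 and every positive integer n, the sum S_n(s) = ∑_{k=0}^{n-1} (-1)^k C(n-1,k) (k+1)^{-s} equals (1/Γ(s)) ∫_0^∞ (1 - e^{-t})^{n-1} e^{-t} t^{s-1} dt. -/
/-! By the binomial theorem the integrand is the finite combination
`∑ₖ (-1)ᵏ C(n-1,k) e^{-(k+1)t} t^{s-1}`, and the Mellin transform of `e^{-(k+1)t}` is
`Γ(s) (k+1)^{-s}`. -/

open Complex Finset MeasureTheory Real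

theorem one_sub_pow_mul_eq_sum {R : Type*} [CommRing R] (x : R) (m : ℕ) :
    (1 - x) ^ m * x = ∑ k ∈ range (m + 1), (-1) ^ k * m.choose k * x ^ (k + 1) := by
  rw [sub_eq_neg_add, add_pow, sum_mul]
  refine sum_congr rfl fun k _ ↦ ?_
  rw [one_pow, neg_pow]
  ring

theorem Nat.choose_eq_zero_of_notMem_range_succ {m k : ℕ} (hk : k ∉ range (m + 1)) :
    m.choose k = 0 :=
  Nat.choose_eq_zero_of_lt (by simpa [Nat.lt_succ_iff] using hk)

theorem hasSum_one_sub_exp_pow_mul_exp (m : ℕ) (t : ℝ) :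
    HasSum (fun k : ℕ ↦ ((-1) ^ k * m.choose k : ℂ) * rexp (-((k : ℝ) + 1) * t))
      (((1 - rexp (-t) : ℝ) : ℂ) ^ m * rexp (-t)) := by
  have hexp (k : ℕ) : rexp (-((k : ℝ) + 1) * t) = rexp (-t) ^ (k + 1) := by
    rw [← Real.exp_nat_mul]
    push_cast
    ring_nf
  rw [ofReal_sub, ofReal_one, one_sub_pow_mul_eq_sum]
  simp_rw [hexp, ofReal_pow]
  refine hasSum_sum_of_ne_finset_zero fun k hk ↦ ?_
  simp [Nat.choose_eq_zero_of_notMem_range_succ hk]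

theorem mellin_one_sub_exp_pow_mul_exp (m : ℕ) {s : ℂ} (hs : 0 < s.re) :
    mellin (fun t : ℝ ↦ ((1 - rexp (-t) : ℝ) : ℂ) ^ m * rexp (-t)) s
      = Gamma s * ∑ k ∈ range (m + 1), (-1) ^ k * m.choose k / ((k : ℂ) + 1) ^ s := by
  have hsum := hasSum_mellin (p := fun k : ℕ ↦ (k : ℝ) + 1)
    (fun k ↦ Or.inr (by positivity)) hs
    (fun t _ ↦ hasSum_one_sub_exp_pow_mul_exp m t)
    (summable_of_ne_finset_zero (s := range (m + 1)) fun k hk ↦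
      by simp [Nat.choose_eq_zero_of_notMem_range_succ hk])
  rw [mul_sum, hsum.unique <| hasSum_sum_of_ne_finset_zero (s := range (m + 1)) fun k hk ↦
    by simp [Nat.choose_eq_zero_of_notMem_range_succ hk]]
  refine sum_congr rfl fun k _ ↦ ?_
  push_cast
  ring

theorem stmt_4 (s : ℂ) (hs : 0 < s.re) (n : ℕ) (hn : 0 < n) :
    ∑ k ∈ Finset.range n, (-1 : ℂ) ^ k * (n - 1).choose k * ((k : ℂ) + 1) ^ (-s)
      = (1 / Complex.Gamma s) *
        ∫ t in Set.Ioi (0 : ℝ),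
          ((1 - Real.exp (-t) : ℝ) : ℂ) ^ (n - 1) * (Real.exp (-t) : ℂ)
            * (t : ℂ) ^ (s - 1) := by
  obtain ⟨m, rfl⟩ := Nat.exists_eq_add_one_of_ne_zero hn.ne'
  have hmellin := mellin_one_sub_exp_pow_mul_exp m hs
  simp only [mellin, smul_eq_mul] at hmellin
  simp_rw [Nat.add_sub_cancel, mul_comm _ ((_ : ℂ) ^ (s - 1)), hmellin, cpow_neg,
    one_div, inv_mul_cancel_left₀ (Gamma_ne_zero_of_re_pos hs), div_eq_mul_inv]
end

section
/- For every positive integer n ≥ 2, ∫_0^∞ (1 - e^{-t})^{n-1} e^{-t} t^{σ-1} dt ≤ (1 - 1/(2n-1))^{n-1} · 2^σ Γ(σ) / √(2n-1), where σ > 0 is real. -/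
/-!
With `x = e^{-t}`, the integrand is `(1 - x)^{n-1} x^{1/2} · t^{σ-1} e^{-t/2}`. Weighted AM-GM
bounds `x^{1/2} (1 - x)^{n-1}` on `[0, 1]` by its value at `x = 1/(2n-1)`, and what remains is
`∫ t^{σ-1} e^{-t/2} dt = 2^σ Γ(σ)`.
-/

open Real MeasureTheory Set

theorem rpow_mul_one_sub_rpow_le {p q x : ℝ} (hp : 0 < p) (hq : 0 < q) (hx₀ : 0 ≤ x)
    (hx₁ : x ≤ 1) : x ^ p * (1 - x) ^ q ≤ (p / (p + q)) ^ p * (q / (p + q)) ^ q := by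
  have hs : 0 < p + q := add_pos hp hq
  set u := x / (p / (p + q))
  set v := (1 - x) / (q / (p + q))
  have hu : 0 ≤ u := by positivity
  have hv : 0 ≤ v := div_nonneg (sub_nonneg.2 hx₁) (by positivity)
  -- AM-GM with weights `p/(p+q)`, `q/(p+q)`; the arithmetic mean is `x + (1 - x) = 1`.
  have hamgm : u ^ (p / (p + q)) * v ^ (q / (p + q)) ≤ 1 := by
    calc u ^ (p / (p + q)) * v ^ (q / (p + q))
        ≤ p / (p + q) * u + q / (p + q) * v :=
          geom_mean_le_arith_mean2_weighted (by positivity) (by positivity) hu hv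
            (by field_simp)
      _ = 1 := by simp only [u, v]; field_simp; ring
  have huv : u ^ p * v ^ q ≤ 1 := by
    have := rpow_le_one (by positivity) hamgm hs.le
    rwa [mul_rpow (by positivity) (by positivity), ← rpow_mul hu, ← rpow_mul hv,
      div_mul_cancel₀ _ hs.ne', div_mul_cancel₀ _ hs.ne'] at this
  calc x ^ p * (1 - x) ^ q = (p / (p + q) * u) ^ p * (q / (p + q) * v) ^ q := by
        simp only [u, v, mul_div_cancel₀ _ (div_pos hp hs).ne',
          mul_div_cancel₀ _ (div_pos hq hs).ne']
    _ = (p / (p + q)) ^ p * (q / (p + q)) ^ q * (u ^ p * v ^ q) := by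
        rw [mul_rpow (by positivity) hu, mul_rpow (by positivity) hv]
        ring
    _ ≤ (p / (p + q)) ^ p * (q / (p + q)) ^ q := mul_le_of_le_one_right (by positivity) huv

theorem one_sub_exp_neg_pow_mul_exp_neg_half_le {n : ℕ} (hn : 2 ≤ n) {t : ℝ} (ht : 0 ≤ t) :
    (1 - exp (-t)) ^ (n - 1) * exp (-t / 2)
      ≤ (1 - 1 / (2 * (n : ℝ) - 1)) ^ (n - 1) / sqrt (2 * (n : ℝ) - 1) := by
  have hN : (2 : ℝ) ≤ n := by exact_mod_cast hn
  have hq : ((n - 1 : ℕ) : ℝ) = n - 1 := by rw [Nat.cast_sub (by omega), Nat.cast_one]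
  have hq₀ : (0 : ℝ) < (n - 1 : ℕ) := by rw [hq]; linarith
  have hbound := rpow_mul_one_sub_rpow_le one_half_pos hq₀ (exp_pos (-t)).le
    (exp_le_one_iff.2 (neg_nonpos.2 ht))
  have hx : exp (-t) ^ (1 / 2 : ℝ) = exp (-t / 2) := by rw [← exp_mul]; ring_nf
  have hs : (1 / 2 : ℝ) + (n - 1 : ℕ) = (2 * n - 1) / 2 := by rw [hq]; ring
  have hp : (1 / 2 : ℝ) / ((2 * n - 1) / 2) = 1 / (2 * n - 1) := by field_simp
  have hq' : ((n - 1 : ℕ) : ℝ) / ((2 * n - 1) / 2) = 1 - 1 / (2 * n - 1) := by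
    rw [hq, div_div_eq_mul_div, eq_sub_iff_add_eq, ← add_div,
      div_eq_one_iff_eq (by linarith)]
    ring
  rw [hs, rpow_natCast, hx, hp, hq', rpow_natCast, ← sqrt_eq_rpow, sqrt_div' _ (by linarith),
    sqrt_one] at hbound
  calc (1 - exp (-t)) ^ (n - 1) * exp (-t / 2) = exp (-t / 2) * (1 - exp (-t)) ^ (n - 1) :=
        mul_comm _ _
    _ ≤ 1 / sqrt (2 * n - 1) * (1 - 1 / (2 * n - 1)) ^ (n - 1) := hbound
    _ = (1 - 1 / (2 * (n : ℝ) - 1)) ^ (n - 1) / sqrt (2 * (n : ℝ) - 1) := by ring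

theorem stmt_5 (n : ℕ) (hn : 2 ≤ n) (σ : ℝ) (hσ : 0 < σ) :
    (∫ t in Set.Ioi (0 : ℝ), (1 - Real.exp (-t)) ^ (n - 1) * Real.exp (-t) * t ^ (σ - 1))
      ≤ (1 - 1 / (2 * (n : ℝ) - 1)) ^ (n - 1) * ((2 : ℝ) ^ σ * Real.Gamma σ)
          / Real.sqrt (2 * (n : ℝ) - 1) := by
  set C := (1 - 1 / (2 * (n : ℝ) - 1)) ^ (n - 1) / sqrt (2 * (n : ℝ) - 1)
  have hΓ : ∫ t in Ioi (0 : ℝ), t ^ (σ - 1) * exp (-(1 / 2 * t)) = 2 ^ σ * Gamma σ := by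
    rw [integral_rpow_mul_exp_neg_mul_Ioi hσ one_half_pos]
    norm_num
  have hint : IntegrableOn (fun t ↦ t ^ (σ - 1) * exp (-(1 / 2 * t))) (Ioi 0) :=
    .of_integral_ne_zero (by rw [hΓ]; exact (mul_pos (by positivity) (Gamma_pos_of_pos hσ)).ne')
  calc _ ≤ ∫ t in Ioi (0 : ℝ), C * (t ^ (σ - 1) * exp (-(1 / 2 * t))) := by
        refine integral_mono_of_nonneg ?_ (hint.const_mul C) ?_ <;>
          filter_upwards [ae_restrict_mem measurableSet_Ioi] with t (ht : 0 < t)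
        · have : 0 ≤ 1 - exp (-t) := sub_nonneg.2 (exp_le_one_iff.2 (by linarith))
          positivity
        · calc (1 - exp (-t)) ^ (n - 1) * exp (-t) * t ^ (σ - 1)
              = (1 - exp (-t)) ^ (n - 1) * exp (-t / 2 + -(1 / 2 * t)) * t ^ (σ - 1) := by
                ring_nf
            _ = (1 - exp (-t)) ^ (n - 1) * exp (-t / 2) * (t ^ (σ - 1) * exp (-(1 / 2 * t))) := by
                rw [exp_add]; ring
            _ ≤ C * (t ^ (σ - 1) * exp (-(1 / 2 * t))) :=
                mul_le_mul_of_nonneg_right (one_sub_exp_neg_pow_mul_exp_neg_half_le hn ht.le)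
                  (by positivity)
    _ = C * (2 ^ σ * Gamma σ) := by rw [integral_const_mul, hΓ]
    _ = _ := by ring
end

section
/- For complex s with Re(s) > 0 and real x with 0 < x < 1, ∑_{n=1}^∞ S_n(s) x^n = -Li_s(x/(x-1)), where S_n(s) = ∑_{k=0}^{n-1} (-1)^k C(n-1,k) (k+1)^{-s} and Li_s(z) = ∑_{n=1}^∞ z^n / n^s (via its integral continuation Li_s(z) = (z/Γ(s)) ∫_0^∞ t^{s-1}/(e^t - z) dt for z outside [1,∞)). -/
/-- The polylogarithm via its integral representation
`Li_s(z) = (z/Γ(s)) ∫_0^∞ t^{s-1}/(e^t - z) dt`. -/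
noncomputable def Li (s z : ℂ) : ℂ :=
  z / Complex.Gamma s * ∫ t in Set.Ioi (0 : ℝ), (t : ℂ) ^ (s - 1) / (Complex.exp t - z)

noncomputable def S (n : ℕ) (s : ℂ) : ℂ :=
  ∑ k ∈ Finset.range n, (-1 : ℂ) ^ k * ((n - 1).choose k : ℂ) * ((k : ℂ) + 1) ^ (-s)

/-!
Expanding `(1 - e^{-t})^n` binomially and integrating term by term against `t^{s-1}` gives
`∫₀^∞ t^{s-1} e^{-t} (1 - e^{-t})^n dt = Γ(s) S_{n+1}(s)`. Weighted by `x^{n+1}`, these integrands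
form a geometric series with ratio `x (1 - e^{-t}) ∈ [0, x)`, dominated by `x^{n+1} e^{-t}`, so sum
and integral may be interchanged; the sum `x e^{-t} / (1 - x (1 - e^{-t}))` equals
`-z / (e^t - z)` for `z = x / (x - 1)`, which is the integrand of `-Γ(s) Li_s(z)`.
-/

open MeasureTheory Set Real Complex

section Mellin

variable {s : ℂ}

lemma norm_mellin_integrand_le_of_norm_le_exp_neg {f : ℝ → ℂ} {c t : ℝ} (ht : 0 < t)
    (hf : ‖f t‖ ≤ c * rexp (-t)) :
    ‖(t : ℂ) ^ (s - 1) • f t‖ ≤ c * (rexp (-t) * t ^ (s.re - 1)) := by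
  rw [norm_smul, norm_cpow_eq_rpow_re_of_pos ht, sub_re, one_re]
  calc t ^ (s.re - 1) * ‖f t‖ ≤ t ^ (s.re - 1) * (c * rexp (-t)) := by gcongr
    _ = c * (rexp (-t) * t ^ (s.re - 1)) := by ring

lemma mellinConvergent_of_norm_le_exp_neg (hs : 0 < s.re) {f : ℝ → ℂ} {c : ℝ}
    (hmeas : AEStronglyMeasurable f (volume.restrict (Ioi 0)))
    (hf : ∀ t ∈ Ioi (0 : ℝ), ‖f t‖ ≤ c * rexp (-t)) :
    MellinConvergent f s := by
  refine ((Real.GammaIntegral_convergent hs).const_mul c).mono' ?_ ?_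
  · exact ((continuous_ofReal.continuousOn.cpow_const fun t ht =>
      ofReal_mem_slitPlane.mpr ht).aestronglyMeasurable measurableSet_Ioi).smul hmeas
  · exact (ae_restrict_iff' measurableSet_Ioi).mpr <| .of_forall fun t ht =>
      norm_mellin_integrand_le_of_norm_le_exp_neg ht (hf t ht)

lemma integral_norm_mellin_integrand_le (hs : 0 < s.re) {f : ℝ → ℂ} {c : ℝ}
    (hf : ∀ t ∈ Ioi (0 : ℝ), ‖f t‖ ≤ c * rexp (-t)) :
    ∫ t in Ioi (0 : ℝ), ‖(t : ℂ) ^ (s - 1) • f t‖ ≤ c * Real.Gamma s.re := by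
  rw [Real.Gamma_eq_integral hs, ← integral_const_mul]
  refine integral_mono_of_nonneg (.of_forall fun t => norm_nonneg _)
    ((Real.GammaIntegral_convergent hs).const_mul c) ?_
  exact (ae_restrict_iff' measurableSet_Ioi).mpr <| .of_forall fun t ht =>
    norm_mellin_integrand_le_of_norm_le_exp_neg ht (hf t ht)

lemma hasSum_mellin_of_norm_le_exp_neg (hs : 0 < s.re) {f : ℕ → ℝ → ℂ} {F : ℝ → ℂ}
    {c : ℕ → ℝ} (hmeas : ∀ n, AEStronglyMeasurable (f n) (volume.restrict (Ioi 0)))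
    (hf : ∀ n, ∀ t ∈ Ioi (0 : ℝ), ‖f n t‖ ≤ c n * rexp (-t)) (hc : Summable c)
    (hF : ∀ t ∈ Ioi (0 : ℝ), HasSum (fun n => f n t) (F t)) :
    HasSum (fun n => mellin (f n) s) (mellin F s) := by
  have hsum := hasSum_integral_of_summable_integral_norm
    (fun n => mellinConvergent_of_norm_le_exp_neg hs (hmeas n) (hf n))
    (.of_nonneg_of_le (fun n => integral_nonneg fun t => norm_nonneg _)
      (fun n => integral_norm_mellin_integrand_le hs (hf n)) (hc.mul_right _))
  rwa [setIntegral_congr_fun measurableSet_Ioi fun t ht => ((hF t ht).const_smul _).tsum_eq]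
    at hsum

end Mellin

lemma exp_neg_mul_one_sub_exp_neg_pow (t : ℝ) (n : ℕ) :
    rexp (-t) * (1 - rexp (-t)) ^ n =
      ∑ k ∈ Finset.range (n + 1), (-1) ^ k * (n.choose k : ℝ) * rexp (-(k + 1) * t) := by
  rw [sub_eq_neg_add, add_pow, Finset.mul_sum]
  refine Finset.sum_congr rfl fun k _ => ?_
  rw [show -((k : ℝ) + 1) * t = (k + 1 : ℕ) * -t by push_cast; ring, Real.exp_nat_mul]
  ring

lemma mellin_exp_neg_mul_one_sub_exp_neg_pow {s : ℂ} (hs : 0 < s.re) (n : ℕ) :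
    mellin (fun t => ((rexp (-t) * (1 - rexp (-t)) ^ n : ℝ) : ℂ)) s = Gamma s * S (n + 1) s := by
  have hvanish : ∀ k ∉ Finset.range (n + 1), (-1 : ℂ) ^ k * (n.choose k : ℂ) = 0 := by
    intro k hk
    rw [Nat.choose_eq_zero_of_lt (by simpa using hk), Nat.cast_zero, mul_zero]
  have hmellin := hasSum_mellin (a := fun k => (-1 : ℂ) ^ k * (n.choose k : ℂ))
    (p := fun k => (k : ℝ) + 1) (F := fun t => ((rexp (-t) * (1 - rexp (-t)) ^ n : ℝ) : ℂ))
    (fun k => Or.inr (by positivity)) hs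
    (fun t _ => by
      rw [exp_neg_mul_one_sub_exp_neg_pow]
      push_cast
      exact hasSum_sum_of_ne_finset_zero fun k hk => by simp [hvanish k hk])
    (summable_of_ne_finset_zero (s := Finset.range (n + 1)) fun k hk => by simp [hvanish k hk])
  rw [hmellin.unique (hasSum_sum_of_ne_finset_zero fun k hk => by simp [hvanish k hk]), S,
    Finset.mul_sum]
  refine Finset.sum_congr rfl fun k _ => ?_
  rw [cpow_neg]
  push_cast
  ring

lemma mellin_pow_succ_mul_exp_neg_mul_one_sub_exp_neg_pow {s : ℂ} (hs : 0 < s.re) (x : ℝ)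
    (n : ℕ) :
    mellin (fun t => ((x ^ (n + 1) * (rexp (-t) * (1 - rexp (-t)) ^ n) : ℝ) : ℂ)) s =
      Gamma s * (S (n + 1) s * (x : ℂ) ^ (n + 1)) := by
  have := mellin_const_smul (fun t => ((rexp (-t) * (1 - rexp (-t)) ^ n : ℝ) : ℂ)) s
    ((x : ℂ) ^ (n + 1))
  simp only [smul_eq_mul, ← ofReal_pow, ← ofReal_mul] at this
  rw [this, mellin_exp_neg_mul_one_sub_exp_neg_pow hs]
  push_cast
  ring

lemma exp_neg_mul_one_sub_exp_neg_pow_mem_Icc {t : ℝ} (ht : 0 ≤ t) (n : ℕ) :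
    rexp (-t) * (1 - rexp (-t)) ^ n ∈ Icc 0 (rexp (-t)) := by
  have hu1 : rexp (-t) ≤ 1 := exp_le_one_iff.mpr (neg_nonpos.mpr ht)
  have hv : 0 ≤ 1 - rexp (-t) := by linarith
  refine ⟨by positivity, mul_le_of_le_one_right (exp_pos _).le (pow_le_one₀ hv ?_)⟩
  linarith [exp_pos (-t)]

lemma hasSum_pow_succ_mul_exp_neg_mul_one_sub_exp_neg_pow {x : ℝ} (hx : 0 < x) (hx1 : x < 1)
    {t : ℝ} (ht : 0 ≤ t) :
    HasSum (fun n : ℕ => x ^ (n + 1) * (rexp (-t) * (1 - rexp (-t)) ^ n))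
      (-(x / (x - 1)) * (1 / (rexp t - x / (x - 1)))) := by
  have hu := exp_pos (-t)
  have hu1 : rexp (-t) ≤ 1 := exp_le_one_iff.mpr (neg_nonpos.mpr ht)
  have hvalue : -(x / (x - 1)) * (1 / (rexp t - x / (x - 1))) =
      x * rexp (-t) * (1 - x * (1 - rexp (-t)))⁻¹ := by
    have hx1' : x - 1 ≠ 0 := by linarith
    have hE := exp_pos t
    have hD : rexp t * (x - 1) - x ≠ 0 := by nlinarith
    rw [Real.exp_neg]
    field_simp
    rw [← one_div_neg_eq_neg_one_div]
    ring
  have hr : 0 ≤ x * (1 - rexp (-t)) := by nlinarith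
  have hr1 : x * (1 - rexp (-t)) < 1 := by nlinarith
  rw [hvalue, show (fun n : ℕ => x ^ (n + 1) * (rexp (-t) * (1 - rexp (-t)) ^ n)) =
      fun n => x * rexp (-t) * (x * (1 - rexp (-t))) ^ n from
    funext fun n => by rw [mul_pow, pow_succ]; ring]
  exact (hasSum_geometric_of_lt_one hr hr1).mul_left _

lemma Gamma_mul_Li {s : ℂ} (hs : Gamma s ≠ 0) (z : ℂ) :
    Gamma s * Li s z = z * mellin (fun t => 1 / (cexp t - z)) s := by
  simp only [Li, mellin, smul_eq_mul, mul_one_div]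
  field_simp

lemma mellin_ofReal_neg_mul_one_div_exp_sub {s : ℂ} (hs : Gamma s ≠ 0) (z : ℝ) :
    mellin (fun t => ((-z * (1 / (rexp t - z)) : ℝ) : ℂ)) s = Gamma s * -Li s z := by
  push_cast
  rw [mul_neg, Gamma_mul_Li hs, ← neg_mul, ← smul_eq_mul, ← mellin_const_smul]
  simp only [smul_eq_mul]

theorem stmt_12 (s : ℂ) (hs : 0 < s.re) (x : ℝ) (hx : 0 < x) (hx1 : x < 1) :
    HasSum (fun n : ℕ => S (n + 1) s * (x : ℂ) ^ (n + 1))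
      (-Li s ((x : ℂ) / ((x : ℂ) - 1))) := by
  have hΓ := Gamma_ne_zero_of_re_pos hs
  have hmellin := hasSum_mellin_of_norm_le_exp_neg hs (c := fun n => x ^ (n + 1))
    (f := fun n t => ((x ^ (n + 1) * (rexp (-t) * (1 - rexp (-t)) ^ n) : ℝ) : ℂ))
    (F := fun t => ((-(x / (x - 1)) * (1 / (rexp t - x / (x - 1))) : ℝ) : ℂ))
    (fun n => by fun_prop)
    (fun n t ht => by
      obtain ⟨h0, h1⟩ := exp_neg_mul_one_sub_exp_neg_pow_mem_Icc (le_of_lt ht) n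
      rw [norm_real, Real.norm_of_nonneg (by positivity)]
      gcongr)
    ((summable_nat_add_iff 1).mpr (summable_geometric_of_lt_one hx.le hx1))
    (fun t ht => hasSum_ofReal.mpr
      (hasSum_pow_succ_mul_exp_neg_mul_one_sub_exp_neg_pow hx hx1 (le_of_lt ht)))
  simp_rw [mellin_pow_succ_mul_exp_neg_mul_one_sub_exp_neg_pow hs,
    mellin_ofReal_neg_mul_one_div_exp_sub hΓ] at hmellin
  push_cast at hmellin
  exact (hasSum_mul_left_iff hΓ).mp hmellin
end

section
/- For complex s with Re(s) > 1, (s-1)ζ(s) = -∫_0^1 Li_s(z/(z-1)) dz, where the integrand is given by the convergent series Li_s(z/(z-1)) = ∑_{n=1}^∞ (z/(z-1))^n / n^s for z ∈ (0, 1/2) extended by the integral representation Li_s(w) = (w/Γ(s)) ∫_0^∞ t^{s-1}/(e^t - w) dt for w ∈ (-∞, 0]. -/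
open MeasureTheory Set Real

lemma hasSum_exp_neg_nat_succ_mul {t : ℝ} (ht : 0 < t) :
    HasSum (fun n : ℕ => rexp (-(n + 1 : ℝ) * t)) (rexp t - 1)⁻¹ := by
  have hr : ‖rexp (-t)‖ < 1 := by simpa using ht
  have hsum : rexp (-t) * (1 - rexp (-t))⁻¹ = (rexp t - 1)⁻¹ := by
    rw [Real.exp_neg]
    field_simp [(sub_pos.2 (Real.one_lt_exp_iff.2 ht)).ne']
  refine hsum ▸ ((hasSum_geometric_of_norm_lt_one hr).mul_left _).congr_fun fun n => ?_
  rw [← Real.exp_nat_mul, ← Real.exp_add]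
  ring_nf

lemma hasSum_nat_succ_mul_exp_neg_nat_succ_mul {t : ℝ} (ht : 0 < t) :
    HasSum (fun n : ℕ => (n + 1 : ℝ) * rexp (-(n + 1 : ℝ) * t)) (rexp t / (rexp t - 1) ^ 2) := by
  have hr : ‖rexp (-t)‖ < 1 := by simpa using ht
  have hsum : rexp (-t) * (1 / (1 - rexp (-t)) ^ (1 + 1)) = rexp t / (rexp t - 1) ^ 2 := by
    rw [one_add_one_eq_two, Real.exp_neg]
    field_simp [(sub_pos.2 (Real.one_lt_exp_iff.2 ht)).ne', Real.exp_ne_zero t]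
  refine hsum ▸ ((hasSum_choose_mul_geometric_of_norm_lt_one 1 hr).mul_left _).congr_fun fun n => ?_
  rw [← Real.exp_nat_mul, Nat.choose_one_right, mul_left_comm, ← Real.exp_add]
  push_cast
  ring_nf

-- A divergent Bochner integral is `0`, so a nonzero value certifies convergence.
lemma hasMellin_of_mellin_eq_of_ne_zero {E : Type*} [NormedAddCommGroup E] [NormedSpace ℂ E]
    {f : ℝ → E} {s : ℂ} {m : E} (h : mellin f s = m) (hm : m ≠ 0) : HasMellin f s m :=
  ⟨Integrable.of_integral_ne_zero (by rwa [← mellin, h]), h⟩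

lemma hasSum_one_div_nat_add_one_cpow {s : ℂ} (hs : 1 < s.re) :
    HasSum (fun n : ℕ => 1 / ((n + 1 : ℝ) : ℂ) ^ s) (riemannZeta s) := by
  rw [zeta_eq_tsum_one_div_nat_add_one_cpow hs]
  push_cast
  exact_mod_cast ((summable_nat_add_iff 1).2 (Complex.summable_one_div_nat_cpow.2 hs)).hasSum

lemma summable_one_div_nat_add_one_rpow {σ : ℝ} (hσ : 1 < σ) :
    Summable fun n : ℕ => 1 / ((n : ℝ) + 1) ^ σ := by
  refine ((Real.summable_one_div_nat_add_rpow 1 σ).2 hσ).congr fun n => ?_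
  rw [abs_of_nonneg (by positivity)]

lemma hasMellin_inv_exp_sub_one {s : ℂ} (hs : 1 < s.re) :
    HasMellin (fun t : ℝ => (((rexp t - 1)⁻¹ : ℝ) : ℂ)) s (Complex.Gamma s * riemannZeta s) := by
  have h := hasSum_mellin (a := fun _ => 1) (p := fun n : ℕ => (n : ℝ) + 1)
    (F := fun t : ℝ => (((rexp t - 1)⁻¹ : ℝ) : ℂ)) (fun n => Or.inr (by positivity))
    (by linarith)
    (fun t ht => (Complex.hasSum_ofReal.2 (hasSum_exp_neg_nat_succ_mul ht)).congr_fun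
      fun _ => one_mul _)
    (by simpa using summable_one_div_nat_add_one_rpow hs)
  refine hasMellin_of_mellin_eq_of_ne_zero (h.unique ?_) ?_
  · simpa [div_eq_mul_inv] using (hasSum_one_div_nat_add_one_cpow hs).mul_left (Complex.Gamma s)
  · exact mul_ne_zero (Complex.Gamma_ne_zero_of_re_pos (by linarith))
      (riemannZeta_ne_zero_of_one_lt_re hs)

lemma hasMellin_exp_div_exp_sub_one_sq {s : ℂ} (hs : 1 < s.re) :
    HasMellin (fun t : ℝ => ((rexp t / (rexp t - 1) ^ 2 : ℝ) : ℂ)) (s + 1)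
      (s * Complex.Gamma s * riemannZeta s) := by
  have hs0 : s ≠ 0 := Complex.ne_zero_of_one_lt_re hs
  have h := hasSum_mellin (a := fun n : ℕ => (n : ℂ) + 1) (p := fun n : ℕ => (n : ℝ) + 1)
    (F := fun t : ℝ => ((rexp t / (rexp t - 1) ^ 2 : ℝ) : ℂ)) (s := s + 1)
    (fun n => Or.inr (by positivity)) (by simp; linarith)
    (fun t ht => (Complex.hasSum_ofReal.2 (hasSum_nat_succ_mul_exp_neg_nat_succ_mul ht)).congr_fun
      fun _ => by push_cast; rfl)
    ((summable_one_div_nat_add_one_rpow hs).congr fun n => by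
      have hn : (0 : ℝ) < n + 1 := by positivity
      rw [show ‖(n : ℂ) + 1‖ = n + 1 by exact_mod_cast Complex.norm_natCast (n + 1), Complex.add_re,
        Complex.one_re, Real.rpow_add_one hn.ne']
      field_simp)
  refine hasMellin_of_mellin_eq_of_ne_zero (h.unique ?_) ?_
  · refine ((hasSum_one_div_nat_add_one_cpow hs).mul_left (s * Complex.Gamma s)).congr_fun
      fun n => ?_
    have hn : ((n + 1 : ℝ) : ℂ) ≠ 0 := by exact_mod_cast (by positivity : (n : ℝ) + 1 ≠ 0)
    rw [Complex.Gamma_add_one s hs0, Complex.cpow_add _ _ hn, Complex.cpow_one]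
    push_cast at hn ⊢
    field_simp
  · exact mul_ne_zero (mul_ne_zero hs0 (Complex.Gamma_ne_zero_of_re_pos (by linarith)))
      (riemannZeta_ne_zero_of_one_lt_re hs)

lemma hasMellin_inv_exp_sub_one_sub_mul_exp_div_exp_sub_one_sq {s : ℂ} (hs : 1 < s.re) :
    HasMellin (fun t : ℝ => (((rexp t - 1)⁻¹ - t * (rexp t / (rexp t - 1) ^ 2) : ℝ) : ℂ)) s
      ((1 - s) * Complex.Gamma s * riemannZeta s) := by
  have h₁ := hasMellin_inv_exp_sub_one hs
  have h₂ := hasMellin_exp_div_exp_sub_one_sq hs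
  have h₂' : HasMellin (fun t : ℝ => (t : ℂ) ^ (1 : ℂ) • ((rexp t / (rexp t - 1) ^ 2 : ℝ) : ℂ)) s
      (s * Complex.Gamma s * riemannZeta s) :=
    ⟨MellinConvergent.cpow_smul.2 h₂.1, (mellin_cpow_smul _ _ _).trans h₂.2⟩
  have h := hasMellin_sub h₁.1 h₂'.1
  rw [h₁.2, h₂'.2] at h
  convert h using 2 with t
  · simp
  · ring

-- `w / (e^t - w)` for `w = z/(z-1)`, after cancelling `z - 1`.
noncomputable def liKernel (t z : ℝ) : ℝ := z / ((rexp t - 1) * z - rexp t)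

lemma exp_sub_one_mul_sub_exp_le_neg_one {t z : ℝ} (ht : 0 ≤ t) (hz : z ≤ 1) :
    (rexp t - 1) * z - rexp t ≤ -1 := by
  nlinarith [Real.one_le_exp ht]

lemma liKernel_nonpos {t z : ℝ} (ht : 0 ≤ t) (hz₀ : 0 ≤ z) (hz₁ : z ≤ 1) : liKernel t z ≤ 0 :=
  div_nonpos_of_nonneg_of_nonpos hz₀ (by linarith [exp_sub_one_mul_sub_exp_le_neg_one ht hz₁])

lemma continuousOn_liKernel {t : ℝ} (ht : 0 ≤ t) : ContinuousOn (liKernel t) (Iic 1) :=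
  continuousOn_id.div (by fun_prop) fun z hz => by
    linarith [exp_sub_one_mul_sub_exp_le_neg_one ht (mem_Iic.1 hz)]

lemma integral_div_mul_sub_add_one {a : ℝ} (ha : 0 < a) :
    ∫ z in (0 : ℝ)..1, z / (a * z - (a + 1)) = 1 / a - (a + 1) / a ^ 2 * Real.log (a + 1) := by
  have hpos : ∀ z ∈ uIcc (0 : ℝ) 1, 0 < a + 1 - a * z := fun z hz => by
    rw [uIcc_of_le zero_le_one] at hz
    nlinarith [hz.2]
  have hderiv : ∀ z ∈ uIcc (0 : ℝ) 1, HasDerivAt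
      (fun z => z / a + (a + 1) / a ^ 2 * Real.log (a + 1 - a * z)) (z / (a * z - (a + 1))) z := by
    intro z hz
    have hlin : HasDerivAt (fun z : ℝ => a + 1 - a * z) (-a) z := by
      simpa using ((hasDerivAt_id z).const_mul a).const_sub (a + 1)
    refine (((hasDerivAt_id z).div_const a).add
      ((hlin.log (hpos z hz).ne').const_mul ((a + 1) / a ^ 2))).congr_deriv ?_
    have hne : a * z - (a + 1) ≠ 0 := by linarith [hpos z hz]
    field_simp [hne, (hpos z hz).ne']
    ring
  have hint : IntervalIntegrable (fun z => z / (a * z - (a + 1))) volume 0 1 :=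
    (continuousOn_id.div (by fun_prop) fun z hz => by linarith [hpos z hz]).intervalIntegrable
  rw [intervalIntegral.integral_eq_sub_of_hasDerivAt hderiv hint]
  simp

lemma integral_liKernel {t : ℝ} (ht : 0 < t) :
    ∫ z in Ioo (0 : ℝ) 1, liKernel t z = (rexp t - 1)⁻¹ - t * (rexp t / (rexp t - 1) ^ 2) := by
  have h := integral_div_mul_sub_add_one (sub_pos.2 (Real.one_lt_exp_iff.2 ht))
  rw [sub_add_cancel, Real.log_exp, intervalIntegral.integral_of_le zero_le_one,
    integral_Ioc_eq_integral_Ioo] at h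
  unfold liKernel
  rw [h]
  ring

lemma Li_div_sub_one (s : ℂ) {z : ℝ} (hz : z < 1) :
    Li s (z / (z - 1)) =
      (Complex.Gamma s)⁻¹ * ∫ t in Ioi (0 : ℝ), (t : ℂ) ^ (s - 1) * (liKernel t z : ℂ) := by
  rw [Li, div_mul_eq_mul_div, div_eq_inv_mul, ← integral_const_mul]
  congr 1
  refine setIntegral_congr_fun measurableSet_Ioi fun t ht => ?_
  have hz₁ : (z : ℂ) - 1 ≠ 0 := by exact_mod_cast (sub_neg.2 hz).ne
  have hden : ((rexp t - 1) * z - rexp t : ℂ) ≠ 0 := by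
    exact_mod_cast (by linarith [exp_sub_one_mul_sub_exp_le_neg_one (le_of_lt ht) hz.le] :
      (rexp t - 1) * z - rexp t ≠ 0)
  rw [liKernel, ← Complex.ofReal_exp]
  push_cast
  field_simp
  ring

lemma integrableOn_liKernel {t : ℝ} (ht : 0 ≤ t) : IntegrableOn (liKernel t) (Ioo 0 1) :=
  ((continuousOn_liKernel ht).mono Icc_subset_Iic_self).integrableOn_Icc.mono_set
    Ioo_subset_Icc_self

lemma integrable_cpow_mul_liKernel {s : ℂ} (hs : 1 < s.re) :
    Integrable (Function.uncurry fun (z t : ℝ) => (t : ℂ) ^ (s - 1) * (liKernel t z : ℂ))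
      ((volume.restrict (Ioo 0 1)).prod (volume.restrict (Ioi 0))) := by
  refine (integrable_prod_iff' ?_).2 ⟨?_, ?_⟩
  · exact (by unfold liKernel; fun_prop : Measurable _).aestronglyMeasurable
  · filter_upwards [ae_restrict_mem measurableSet_Ioi] with t ht
    simp only [Function.uncurry_apply_pair]
    exact ((integrableOn_liKernel (le_of_lt ht)).ofReal (𝕜 := ℂ)).const_mul _
  · refine IntegrableOn.congr_fun
      (hasMellin_inv_exp_sub_one_sub_mul_exp_div_exp_sub_one_sq hs).1.norm
      (fun t ht => ?_) measurableSet_Ioi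
    have hk : ∀ z ∈ Ioo (0 : ℝ) 1, ‖(t : ℂ) ^ (s - 1) * (liKernel t z : ℂ)‖
        = ‖(t : ℂ) ^ (s - 1)‖ * -liKernel t z := fun z hz => by
      rw [norm_mul, Complex.norm_real, Real.norm_of_nonpos
        (liKernel_nonpos (le_of_lt ht) hz.1.le hz.2.le)]
    have hint : ∫ z in Ioo (0 : ℝ) 1, liKernel t z ≤ 0 :=
      setIntegral_nonpos measurableSet_Ioo fun z hz => liKernel_nonpos (le_of_lt ht) hz.1.le hz.2.le
    simp only [Function.uncurry_apply_pair]
    rw [eq_comm, setIntegral_congr_fun measurableSet_Ioo hk, integral_const_mul, integral_neg,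
      ← Real.norm_of_nonpos hint, integral_liKernel ht, norm_smul, Complex.norm_real]

theorem stmt_13 (s : ℂ) (hs : 1 < s.re) :
    (s - 1) * riemannZeta s
      = -∫ z in (0 : ℝ)..1, Li s ((z : ℂ) / ((z : ℂ) - 1)) := by
  have hΓ : Complex.Gamma s ≠ 0 := Complex.Gamma_ne_zero_of_re_pos (by linarith)
  have hLi : ∫ z in (0 : ℝ)..1, Li s ((z : ℂ) / ((z : ℂ) - 1)) = (1 - s) * riemannZeta s := by
    calc ∫ z in (0 : ℝ)..1, Li s ((z : ℂ) / ((z : ℂ) - 1))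
        = ∫ z in Ioo (0 : ℝ) 1, (Complex.Gamma s)⁻¹ *
            ∫ t in Ioi (0 : ℝ), (t : ℂ) ^ (s - 1) * (liKernel t z : ℂ) := by
          rw [intervalIntegral.integral_of_le zero_le_one, integral_Ioc_eq_integral_Ioo]
          exact setIntegral_congr_fun measurableSet_Ioo fun z hz => Li_div_sub_one s hz.2
      _ = (Complex.Gamma s)⁻¹ *
            ∫ t in Ioi (0 : ℝ), ∫ z in Ioo (0 : ℝ) 1, (t : ℂ) ^ (s - 1) * (liKernel t z : ℂ) := by
          rw [integral_const_mul, integral_integral_swap (integrable_cpow_mul_liKernel hs)]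
      _ = (Complex.Gamma s)⁻¹ * mellin
            (fun t : ℝ => (((rexp t - 1)⁻¹ - t * (rexp t / (rexp t - 1) ^ 2) : ℝ) : ℂ)) s := by
          congr 1
          refine setIntegral_congr_fun measurableSet_Ioi fun t ht => ?_
          rw [integral_const_mul, integral_complex_ofReal, integral_liKernel ht, smul_eq_mul]
      _ = (1 - s) * riemannZeta s := by
          rw [(hasMellin_inv_exp_sub_one_sub_mul_exp_div_exp_sub_one_sq hs).2]
          field_simp
  rw [hLi]
  ring
end
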